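/- If L is generic and satisfies the triangle inequality, then the number of vertices of Γ(L) is at least 2^{n−1} − 2; that is, among all generic n-linkages satisfying the triangle inequality, the n-bow has the minimal possible number of vertices. -/

import Mathlib

open Finset

/-- `I ⊆ [n]` is *short*: the sum of its lengths is less than that of its complement. -/
def ShortSet {n : ℕ} (L : Fin n → ℝ) (I : Finset (Fin n)) : Prop :=
  ∑ i ∈ I, L i < ∑ i ∈ Iᶜ, L i

/-- `I ⊆ [n]` is *long*: the sum of its lengths is greater than that of its complement. -/
def LongSet {n : ℕ} (L : Fin n → ℝ) (I : Finset (Fin n)) : Prop :=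
  ∑ i ∈ Iᶜ, L i < ∑ i ∈ I, L i

/-- The length vector `L` is *generic*. -/
def GenericVec {n : ℕ} (L : Fin n → ℝ) : Prop :=
  ∀ I : Finset (Fin n), ∑ i ∈ I, L i ≠ ∑ i ∈ Iᶜ, L i

/-- `L` satisfies the triangle inequality: every singleton is short. -/
def TriangleIneq {n : ℕ} (L : Fin n → ℝ) : Prop :=
  ∀ i : Fin n, ShortSet L {i}

/-- Ordered triples of subsets of `[n]`. -/
abbrev LTriple (n : ℕ) := Finset (Fin n) × Finset (Fin n) × Finset (Fin n)

/-- An ordered triple `(I, J, K)` representing a vertex of `Γ(L)`: three pairwise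
disjoint nonempty short sets whose union is `[n]`. -/
def IsVertex {n : ℕ} (L : Fin n → ℝ) (V : LTriple n) : Prop :=
  V.1.Nonempty ∧ V.2.1.Nonempty ∧ V.2.2.Nonempty ∧
  ShortSet L V.1 ∧ ShortSet L V.2.1 ∧ ShortSet L V.2.2 ∧
  Disjoint V.1 V.2.1 ∧ Disjoint V.1 V.2.2 ∧ Disjoint V.2.1 V.2.2 ∧
  V.1 ∪ V.2.1 ∪ V.2.2 = Finset.univ

/-- Cyclic rotation of an ordered triple. -/
def rotT {n : ℕ} (V : LTriple n) : LTriple n := (V.2.1, V.2.2, V.1)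

/-- Two ordered triples represent the same cyclically ordered partition
(`(I,J,K)`, `(J,K,I)` and `(K,I,J)` are identified). -/
def CyclEq {n : ℕ} (V W : LTriple n) : Prop :=
  W = V ∨ W = rotT V ∨ W = rotT (rotT V)

/-- The mirror image of the vertex `(I, J, K)` is the vertex `(J, I, K)`. -/
def mirrorT {n : ℕ} (V : LTriple n) : LTriple n := (V.2.1, V.1, V.2.2)

/-- The elementary move on representatives: shift a nonempty proper subset
`S ⊊ I` to the second part, provided `J ∪ S` stays short. -/
def MoveStep {n : ℕ} (L : Fin n → ℝ) (V W : LTriple n) : Prop :=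
  ∃ S : Finset (Fin n), S.Nonempty ∧ S ⊂ V.1 ∧ ShortSet L (V.2.1 ∪ S) ∧
    W = (V.1 \ S, V.2.1 ∪ S, V.2.2)

/-- Adjacency in `Γ(L)`: one of the two vertices has a representative from which an
elementary move leads to a representative of the other. -/
def GammaAdj {n : ℕ} (L : Fin n → ℝ) (V W : LTriple n) : Prop :=
  (∃ V' W' : LTriple n, CyclEq V V' ∧ MoveStep L V' W' ∧ CyclEq W W') ∨
  (∃ W' V' : LTriple n, CyclEq W W' ∧ MoveStep L W' V' ∧ CyclEq V V')

/-- There is a path of length `m` (i.e. with `m` consecutive edges) in `Γ(L)`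
from the vertex `V` to the vertex `W`. -/
def GammaPath {n : ℕ} (L : Fin n → ℝ) (m : ℕ) (V W : LTriple n) : Prop :=
  ∃ f : ℕ → LTriple n, CyclEq V (f 0) ∧ CyclEq W (f m) ∧
    (∀ i ≤ m, IsVertex L (f i)) ∧ ∀ i < m, GammaAdj L (f i) (f (i + 1))

open scoped Classical in
/-- The finset of ordered triples representing vertices of `Γ(L)`; the number of
vertices of `Γ(L)` is one third of its cardinality. -/
noncomputable def vertexTriples {n : ℕ} (L : Fin n → ℝ) : Finset (LTriple n) :=
  Finset.univ.filter (fun V => IsVertex L V)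

/-!
Fix an index `m` of maximal length and put `M = [n] ∖ {m}`. Each nonempty proper `A ⊊ M`, with
`B = M ∖ A`, yields a vertex `(I, J, K)` with `m ∈ K`: `(A, B, {m})` if `A` and `B` are short;
otherwise exactly one of them, `X`, is long, so `Xᶜ` is short, and `X = P ⊔ Q` with `P`, `Q`
short, giving `(P, Q, Xᶜ)` for `X = A` and `(Q, P, Xᶜ)` for `X = B`; this orientation makes `A`
recoverable from the vertex. The split exists because if `P ⊆ X` is short of maximal length and
`X ∖ P` is long, then `P ∪ {x}` is long for `x ∈ X ∖ P`, and the two inequalities add up to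
`l_x > |Xᶜ|_L ≥ l_m`. The three cyclic rotations of these `2^(n-1) - 2` vertex triples are
pairwise distinct, as they put `m` in different parts.
-/

open Finset

section ShortLong

variable {n : ℕ} {L : Fin n → ℝ} {I : Finset (Fin n)}

theorem longSet_iff : LongSet L I ↔ ∑ i, L i < 2 * ∑ i ∈ I, L i := by
  rw [LongSet, ← sum_add_sum_compl I L]
  constructor <;> intro h <;> linarith

theorem shortSet_compl : ShortSet L Iᶜ ↔ LongSet L I := by
  rw [ShortSet, compl_compl, LongSet]

theorem ShortSet.not_longSet (h : ShortSet L I) : ¬LongSet L I :=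
  lt_asymm h

theorem LongSet.of_not_shortSet (hgen : GenericVec L) (h : ¬ShortSet L I) : LongSet L I :=
  (not_lt.mp h).lt_of_ne (hgen I).symm

end ShortLong

section Split

variable {n : ℕ} {L : Fin n → ℝ}

def IsShortSplit (L : Fin n → ℝ) (X P : Finset (Fin n)) : Prop :=
  P ⊆ X ∧ P.Nonempty ∧ (X \ P).Nonempty ∧ ShortSet L P ∧ ShortSet L (X \ P)

theorem exists_isShortSplit (hpos : ∀ i, 0 < L i) (hgen : GenericVec L) {X : Finset (Fin n)}
    (hX : LongSet L X) (hsmall : ∀ x ∈ X, L x ≤ ∑ i ∈ Xᶜ, L i) : ∃ P, IsShortSplit L X P := by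
  classical
  have hempty : ShortSet L ∅ := by
    have := sum_nonneg fun i (_ : i ∈ Xᶜ) => (hpos i).le
    have := sum_add_sum_compl X L
    simp only [ShortSet, sum_empty, compl_empty]
    linarith [show ∑ i ∈ Xᶜ, L i < ∑ i ∈ X, L i from hX]
  obtain ⟨P, hP, hPmax⟩ := exists_max_image (X.powerset.filter (ShortSet L))
    (fun P => ∑ i ∈ P, L i) ⟨∅, by simpa using hempty⟩
  obtain ⟨hPX, hPs⟩ : P ⊆ X ∧ ShortSet L P := by simpa using hP
  have hQ : (X \ P).Nonempty :=
    sdiff_nonempty.mpr fun hXP => hPs.not_longSet (hPX.antisymm hXP ▸ hX)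
  have hQs : ShortSet L (X \ P) := by
    by_contra hQs
    obtain ⟨a, ha⟩ := hQ
    rw [mem_sdiff] at ha
    have haP : ¬ShortSet L (insert a P) := fun h => by
      have := hPmax (insert a P) (by simpa using ⟨insert_subset ha.1 hPX, h⟩)
      rw [sum_insert ha.2] at this
      linarith [hpos a]
    have h1 := longSet_iff.mp (LongSet.of_not_shortSet hgen haP)
    have h2 := longSet_iff.mp (LongSet.of_not_shortSet hgen hQs)
    rw [sum_insert ha.2] at h1
    have := sum_sdiff hPX (f := L)
    have := sum_add_sum_compl X L
    linarith [hsmall a ha.1]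
  refine ⟨P, hPX, nonempty_iff_ne_empty.mpr ?_, hQ, hPs, hQs⟩
  rintro rfl
  exact hQs.not_longSet (by simpa using hX)

noncomputable def shortSplit (L : Fin n → ℝ) (X : Finset (Fin n)) : Finset (Fin n) :=
  Classical.epsilon (IsShortSplit L X)

theorem isShortSplit_shortSplit (hpos : ∀ i, 0 < L i) (hgen : GenericVec L) {m : Fin n}
    (hm : ∀ i, L i ≤ L m) {X : Finset (Fin n)} (hmX : m ∉ X) (hX : LongSet L X) :
    IsShortSplit L X (shortSplit L X) :=
  Classical.epsilon_spec <| exists_isShortSplit hpos hgen hX fun x _ =>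
    (hm x).trans (single_le_sum (fun i _ => (hpos i).le) (mem_compl.mpr hmX))

noncomputable def splitTriple (L : Fin n → ℝ) (X : Finset (Fin n)) : LTriple n :=
  (shortSplit L X, X \ shortSplit L X, Xᶜ)

end Split

section Vertices

variable {n : ℕ} {L : Fin n → ℝ}

theorem mem_vertexTriples {V : LTriple n} : V ∈ vertexTriples L ↔ IsVertex L V := by
  simp [vertexTriples]

theorem isVertex_of_union_eq_compl {I J K : Finset (Fin n)} (hI : I.Nonempty) (hJ : J.Nonempty)
    (hK : K.Nonempty) (hIs : ShortSet L I) (hJs : ShortSet L J) (hKs : ShortSet L K)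
    (hIJ : Disjoint I J) (hIJK : I ∪ J = Kᶜ) : IsVertex L (I, J, K) := by
  have hIK : I ⊆ Kᶜ := hIJK ▸ subset_union_left
  have hJK : J ⊆ Kᶜ := hIJK ▸ subset_union_right
  exact ⟨hI, hJ, hK, hIs, hJs, hKs, hIJ, subset_compl_iff_disjoint_right.mp hIK,
    subset_compl_iff_disjoint_right.mp hJK, by rw [hIJK, union_comm]; exact union_compl K⟩

theorem IsVertex.rotT {V : LTriple n} (h : IsVertex L V) : IsVertex L (rotT V) := by
  obtain ⟨h1, h2, h3, h4, h5, h6, h7, h8, h9, h10⟩ := h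
  refine ⟨h2, h3, h1, h5, h6, h4, h9, h7.symm, h8.symm, ?_⟩
  rwa [union_comm, ← union_assoc]

theorem IsVertex.mirrorT {V : LTriple n} (h : IsVertex L V) : IsVertex L (mirrorT V) := by
  obtain ⟨h1, h2, h3, h4, h5, h6, h7, h8, h9, h10⟩ := h
  refine ⟨h2, h1, h3, h5, h4, h6, h7.symm, h9, h8, ?_⟩
  rwa [_root_.mirrorT, union_comm V.2.1]

theorem isVertex_splitTriple {X : Finset (Fin n)} (hX : LongSet L X) (hXc : Xᶜ.Nonempty)
    (hP : IsShortSplit L X (shortSplit L X)) : IsVertex L (splitTriple L X) := by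
  obtain ⟨hPX, hP, hQ, hPs, hQs⟩ := hP
  exact isVertex_of_union_eq_compl hP hQ hXc hPs hQs (shortSet_compl.mpr hX) disjoint_sdiff
    (by rw [union_sdiff_of_subset hPX, compl_compl])

end Vertices

section Encoding

variable {n : ℕ} {L : Fin n → ℝ} {m : Fin n}

open Classical in
noncomputable def vertexOfSubset (L : Fin n → ℝ) (m : Fin n) (A : Finset (Fin n)) : LTriple n :=
  if ShortSet L A then
    if ShortSet L (insert m A)ᶜ then (A, (insert m A)ᶜ, {m})
    else mirrorT (splitTriple L (insert m A)ᶜ)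
  else splitTriple L A

noncomputable def subsetOfVertex (L : Fin n → ℝ) (m : Fin n) (V : LTriple n) : Finset (Fin n) :=
  if V.2.2 = {m} then V.1
  else if splitTriple L (V.1 ∪ V.2.1) = V then V.1 ∪ V.2.1
  else V.2.2.erase m

theorem subsetOfVertex_splitTriple {X : Finset (Fin n)} (hXc : Xᶜ ≠ {m})
    (hP : IsShortSplit L X (shortSplit L X)) : subsetOfVertex L m (splitTriple L X) = X := by
  have hX : (splitTriple L X).1 ∪ (splitTriple L X).2.1 = X := union_sdiff_of_subset hP.1
  have hK : (splitTriple L X).2.2 = Xᶜ := rfl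
  rw [subsetOfVertex, hK, if_neg hXc, hX, if_pos rfl]

theorem subsetOfVertex_mirrorT_splitTriple {X : Finset (Fin n)} (hXc : Xᶜ ≠ {m})
    (hP : IsShortSplit L X (shortSplit L X)) :
    subsetOfVertex L m (mirrorT (splitTriple L X)) = Xᶜ.erase m := by
  obtain ⟨hPX, hP, -, -, -⟩ := hP
  have hX : (mirrorT (splitTriple L X)).1 ∪ (mirrorT (splitTriple L X)).2.1 = X :=
    sdiff_union_of_subset hPX
  have hne : splitTriple L X ≠ mirrorT (splitTriple L X) := fun h => by
    have hd : Disjoint (shortSplit L X) (X \ shortSplit L X) := disjoint_sdiff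
    rw [← show shortSplit L X = X \ shortSplit L X from congrArg Prod.fst h] at hd
    exact hP.ne_empty (disjoint_self.mp hd)
  have hK : (mirrorT (splitTriple L X)).2.2 = Xᶜ := rfl
  rw [subsetOfVertex, hK, if_neg hXc, hX, if_neg hne]

theorem vertexOfSubset_spec (hpos : ∀ i, 0 < L i) (hgen : GenericVec L) (htri : TriangleIneq L)
    (hm : ∀ i, L i ≤ L m) {A : Finset (Fin n)} (hmA : m ∉ A) (hA : A.Nonempty)
    (hB : (insert m A)ᶜ.Nonempty) :
    IsVertex L (vertexOfSubset L m A) ∧ m ∈ (vertexOfSubset L m A).2.2 ∧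
      subsetOfVertex L m (vertexOfSubset L m A) = A := by
  set B := (insert m A)ᶜ
  have hBc : Bᶜ = insert m A := compl_compl _
  have hmB : m ∉ B := by simp [B]
  have hmBc : m ∈ Bᶜ := hBc ▸ mem_insert_self m A
  have hAc : Aᶜ ≠ {m} := fun h => by
    obtain ⟨b, hb⟩ := hB
    rw [mem_compl, mem_insert, not_or] at hb
    exact hb.1 (mem_singleton.mp (h ▸ mem_compl.mpr hb.2))
  have hBc' : Bᶜ ≠ {m} := fun h => by
    obtain ⟨a, ha⟩ := hA
    rw [hBc] at h
    exact hmA (mem_singleton.mp (h ▸ mem_insert_of_mem ha) ▸ ha)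
  unfold vertexOfSubset
  split_ifs with hAs hBs
  · have hAB : A ∪ B = {m}ᶜ := by
      ext x
      by_cases hx : x = m <;> simp [B, hx, hmA, em]
    refine ⟨isVertex_of_union_eq_compl hA hB (singleton_nonempty m) hAs hBs (htri m)
      (subset_compl_iff_disjoint_right.mp (hBc ▸ subset_insert m A : A ⊆ Bᶜ)) hAB,
      mem_singleton_self m, by simp [subsetOfVertex]⟩
  · have hBl := LongSet.of_not_shortSet hgen hBs
    have hP := isShortSplit_shortSplit hpos hgen hm hmB hBl
    refine ⟨(isVertex_splitTriple hBl ⟨m, hmBc⟩ hP).mirrorT, hmBc, ?_⟩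
    rw [subsetOfVertex_mirrorT_splitTriple hBc' hP, hBc, erase_insert hmA]
  · have hAl := LongSet.of_not_shortSet hgen hAs
    have hP := isShortSplit_shortSplit hpos hgen hm hmA hAl
    exact ⟨isVertex_splitTriple hAl ⟨m, mem_compl.mpr hmA⟩ hP, mem_compl.mpr hmA,
      subsetOfVertex_splitTriple hAc hP⟩

end Encoding

section Counting

variable {n : ℕ} {L : Fin n → ℝ} {m : Fin n}

theorem rotT_injective : Function.Injective (rotT : LTriple n → LTriple n) := by
  rintro ⟨I, J, K⟩ ⟨I', J', K'⟩ h
  simp_all [rotT]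

theorem card_filter_mem_le_of_rotT (p q : LTriple n → Finset (Fin n))
    (hpq : ∀ V, p (rotT V) = q V) :
    #{V ∈ vertexTriples L | m ∈ q V} ≤ #{V ∈ vertexTriples L | m ∈ p V} :=
  card_le_card_of_injOn rotT (fun V hV => by
    simp only [mem_coe, mem_filter, mem_vertexTriples, hpq] at hV ⊢
    exact ⟨hV.1.rotT, hV.2⟩) rotT_injective.injOn

theorem three_mul_card_filter_mem_le :
    3 * #{V ∈ vertexTriples L | m ∈ V.2.2} ≤ #(vertexTriples L) := by
  have hKJ := card_filter_mem_le_of_rotT (L := L) (m := m)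
    (fun V => V.2.1) (fun V => V.2.2) fun _ => rfl
  have hJI := card_filter_mem_le_of_rotT (L := L) (m := m)
    (fun V => V.1) (fun V => V.2.1) fun _ => rfl
  set T := vertexTriples L
  have hdisj : ∀ (p q : LTriple n → Finset (Fin n)), (∀ V, IsVertex L V → Disjoint (p V) (q V)) →
      Disjoint {V ∈ T | m ∈ p V} {V ∈ T | m ∈ q V} := fun p q h =>
    disjoint_filter.mpr fun V hV hp hq => disjoint_left.mp (h V (mem_vertexTriples.mp hV)) hp hq
  have hIJ := hdisj (fun V => V.1) (fun V => V.2.1) fun _ hV => hV.2.2.2.2.2.2.1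
  have hIK := hdisj (fun V => V.1) (fun V => V.2.2) fun _ hV => hV.2.2.2.2.2.2.2.1
  have hJK := hdisj (fun V => V.2.1) (fun V => V.2.2) fun _ hV => hV.2.2.2.2.2.2.2.2.1
  calc 3 * #{V ∈ T | m ∈ V.2.2}
      ≤ #{V ∈ T | m ∈ V.1} + #{V ∈ T | m ∈ V.2.1} + #{V ∈ T | m ∈ V.2.2} := by omega
    _ = #({V ∈ T | m ∈ V.1} ∪ {V ∈ T | m ∈ V.2.1} ∪ {V ∈ T | m ∈ V.2.2}) := by
      rw [card_union_of_disjoint (disjoint_union_left.mpr ⟨hIK, hJK⟩),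
        card_union_of_disjoint hIJ]
    _ ≤ #T := card_le_card <| union_subset (union_subset (filter_subset _ _)
      (filter_subset _ _)) (filter_subset _ _)

theorem card_properSubsets_le_card_filter_mem (hpos : ∀ i, 0 < L i) (hgen : GenericVec L)
    (htri : TriangleIneq L) (hm : ∀ i, L i ≤ L m) :
    #(((univ.erase m).powerset.erase ∅).erase (univ.erase m)) ≤
      #{V ∈ vertexTriples L | m ∈ V.2.2} := by
  have hspec : ∀ A ∈ ((univ.erase m).powerset.erase ∅).erase (univ.erase m),
      IsVertex L (vertexOfSubset L m A) ∧ m ∈ (vertexOfSubset L m A).2.2 ∧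
        subsetOfVertex L m (vertexOfSubset L m A) = A := by
    intro A hA
    simp only [mem_erase, mem_powerset, ne_eq] at hA
    obtain ⟨hAM, hA, hAsub⟩ := hA
    have hmA : m ∉ A := fun h => by simpa using hAsub h
    refine vertexOfSubset_spec hpos hgen htri hm hmA (nonempty_iff_ne_empty.mpr hA)
      (nonempty_iff_ne_empty.mpr fun h => hAM ?_)
    rw [← erase_insert hmA, (compl_eq_empty_iff _).mp h]
  exact card_le_card_of_injOn (vertexOfSubset L m)
    (fun A hA => mem_filter.mpr ⟨mem_vertexTriples.mpr (hspec A hA).1, (hspec A hA).2.1⟩)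
    fun A hA B hB h => (hspec A hA).2.2.symm.trans (h ▸ (hspec B hB).2.2)

end Counting

/-- If `L` is generic and satisfies the triangle inequality, then the
number of vertices of `Γ(L)` is at least `2^{n−1} − 2` (the `n`-bow has the minimal
possible number of vertices); equivalently the number of ordered vertex triples is at
least `3·(2^{n−1} − 2)`. -/
theorem num_vertices_lower_bound (n : ℕ) (hn : 3 ≤ n) (L : Fin n → ℝ)
    (hpos : ∀ i, 0 < L i) (hgen : GenericVec L) (htri : TriangleIneq L) :
    3 * (2 ^ (n - 1) - 2) ≤ (vertexTriples L).card := by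
  have : Nonempty (Fin n) := ⟨⟨0, by omega⟩⟩
  obtain ⟨m, hm⟩ := Finite.exists_max L
  have hcard : #(univ.erase m).powerset = 2 ^ (n - 1) := by
    rw [card_powerset, card_erase_of_mem (mem_univ m), card_univ, Fintype.card_fin]
  have hproper : 2 ^ (n - 1) - 2 ≤ #(((univ.erase m).powerset.erase ∅).erase (univ.erase m)) := by
    have := pred_card_le_card_erase (s := (univ.erase m).powerset) (a := ∅)
    have := pred_card_le_card_erase (s := (univ.erase m).powerset.erase ∅) (a := univ.erase m)
    omega
  calc 3 * (2 ^ (n - 1) - 2)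
      ≤ 3 * #{V ∈ vertexTriples L | m ∈ V.2.2} := by
        gcongr
        exact hproper.trans (card_properSubsets_le_card_filter_mem hpos hgen htri hm)
    _ ≤ #(vertexTriples L) := three_mul_card_filter_mem_le
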